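/- Let D be a pretriangulated (stable) category, C ⊆ D a full triangulated subcategory, and E ⊆ C a full triangulated subcategory of C (hence also of D). Then the induced functor on Verdier quotients C/E → D/E is fully faithful. -/

import Mathlib

open CategoryTheory CategoryTheory.Limits CategoryTheory.Pretriangulated

namespace CategoryTheory.Triangulated

/-- The structure `Triangulated.Subcategory` of the older Mathlib (removed since):
a triangulated subcategory, given by a predicate `P` containing a zero object,
stable under shifts and closed under extensions up to isomorphism. -/
structure Subcategory (C : Type*) [Category C] [HasZeroObject C] [HasShift C ℤ]
    [Preadditive C] [∀ n : ℤ, (shiftFunctor C n).Additive] [Pretriangulated C] where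
  P : C → Prop
  zero' : ∃ (Z : C) (_ : IsZero Z), P Z
  shift (X : C) (n : ℤ) : P X → P (X⟦n⟧)
  ext₂' (T : Triangle C) (_ : T ∈ distTriang C) : P T.obj₁ → P T.obj₃ →
    ∃ (Y : C) (_ : P Y), Nonempty (T.obj₂ ≅ Y)

/-- The class of morphisms whose cone satisfies `S.P` (old `Subcategory.W`). -/
def Subcategory.W {C : Type*} [Category C] [HasZeroObject C] [HasShift C ℤ]
    [Preadditive C] [∀ n : ℤ, (shiftFunctor C n).Additive] [Pretriangulated C]
    (S : Subcategory C) : MorphismProperty C :=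
  fun X Y f => ∃ (Z : C) (g : Y ⟶ Z) (h : Z ⟶ X⟦(1 : ℤ)⟧)
    (_ : Triangle.mk f g h ∈ distTriang C), S.P Z

end CategoryTheory.Triangulated

/-!
Let `s : ι X ⟶ Z` be a morphism of `D` whose cone `E` satisfies `SE'.P`. Writing `E ≅ ι E₀` with
`SE.P E₀`, the rotated triangle shows that `s` is, up to isomorphism, the image of the cone
morphism `X ⟶ X'` of some `E₀⟦-1⟧ ⟶ X`; so `s` lifts to a morphism of `SE.W`. Without the
octahedral axiom `SE.W` need not be closed under composition, but its multiplicative closure still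
has a calculus of left fractions (the Ore and cancellation conditions only use the axioms of a
pretriangulated category), and the lifting extends to it. A morphism `L₂ (ι X₁) ⟶ L₂ (ι X₂)` is
then a left fraction whose denominator lifts to `C`, which gives fullness; and two morphisms of
`C` identified by `L₂ ∘ ι` are equalised by some such `s`, hence already by its lift in `C`, which
gives faithfulness.
-/

namespace CategoryTheory

open Category Limits Pretriangulated

namespace MorphismProperty

variable {C D : Type*} [Category C] [Category D]

lemma IsInvertedBy.multiplicativeClosure {W : MorphismProperty C} {L : C ⥤ D}
    (h : W.IsInvertedBy L) : W.multiplicativeClosure.IsInvertedBy L :=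
  (multiplicativeClosure_le_iff _ ((isomorphisms D).inverseImage L)).2 h

lemma hasLeftCalculusOfFractions_multiplicativeClosure (W : MorphismProperty C)
    (ore : ∀ ⦃X' X Y : C⦄ (s : X' ⟶ X), W s → ∀ f : X' ⟶ Y,
      ∃ (Y' : C) (f' : X ⟶ Y') (t : Y ⟶ Y'), W t ∧ f ≫ t = s ≫ f')
    (ext : ∀ ⦃X' X Y : C⦄ (f₁ f₂ : X ⟶ Y) (s : X' ⟶ X), W s → s ≫ f₁ = s ≫ f₂ →
      ∃ (Y' : C) (t : Y ⟶ Y'), W t ∧ f₁ ≫ t = f₂ ≫ t) :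
    W.multiplicativeClosure.HasLeftCalculusOfFractions where
  exists_leftFraction X Y φ := by
    suffices ∀ ⦃X' X : C⦄ (s : X' ⟶ X), W.multiplicativeClosure s → ∀ {Y : C} (f : X' ⟶ Y),
        ∃ (Y' : C) (f' : X ⟶ Y') (t : Y ⟶ Y'), W.multiplicativeClosure t ∧ f ≫ t = s ≫ f' by
      obtain ⟨Y', f', t, ht, fac⟩ := this φ.s φ.hs φ.f
      exact ⟨⟨f', t, ht⟩, fac⟩
    intro X' X s hs
    induction hs with
    | of s hs =>
      intro Y f
      obtain ⟨Y', f', t, ht, fac⟩ := ore s hs f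
      exact ⟨Y', f', t, .of t ht, fac⟩
    | id X => exact fun f => ⟨_, f, 𝟙 _, .id _, by simp⟩
    | comp_of s g _ hg ih =>
      intro Y f
      obtain ⟨Y₁, a₁, t₁, ht₁, fac₁⟩ := ih f
      obtain ⟨Y₂, a₂, t₂, ht₂, fac₂⟩ := ore g hg a₁
      exact ⟨Y₂, a₂, t₁ ≫ t₂, .comp_of _ _ ht₁ ht₂, by rw [reassoc_of% fac₁, fac₂, assoc]⟩
  ext X' X Y f₁ f₂ s hs := by
    induction hs generalizing Y with
    | of s hs =>
      intro h
      obtain ⟨Y', t, ht, fac⟩ := ext f₁ f₂ s hs h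
      exact ⟨Y', t, .of t ht, fac⟩
    | id X => exact fun h => ⟨_, 𝟙 _, .id _, by simpa using h⟩
    | comp_of s g _ hg ih =>
      intro h
      obtain ⟨Y₁, t₁, ht₁, fac₁⟩ := ih _ (g ≫ f₁) (g ≫ f₂) (by simpa using h)
      obtain ⟨Y₂, t₂, ht₂, fac₂⟩ := ext (f₁ ≫ t₁) (f₂ ≫ t₁) g hg (by simpa using fac₁)
      exact ⟨Y₂, t₁ ≫ t₂, .comp_of _ _ ht₁ ht₂, by simpa using fac₂⟩

end MorphismProperty

lemma Functor.IsLocalization.multiplicativeClosure {C D : Type*} [Category C] [Category D]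
    (L : C ⥤ D) (W : MorphismProperty C) [L.IsLocalization W] :
    L.IsLocalization W.multiplicativeClosure :=
  of_equivalence_source L W L _ .refl
    (fun _ _ _ hf => W.multiplicativeClosure.le_isoClosure _ (.of _ hf))
    (Localization.inverts L W).multiplicativeClosure L.leftUnitor

namespace Triangulated

variable {C : Type*} [Category C] [HasZeroObject C] [HasShift C ℤ] [Preadditive C]
  [∀ n : ℤ, (shiftFunctor C n).Additive] [Pretriangulated C] {S : Subcategory C}

lemma Subcategory.W.ore {X' X Y : C} {s : X' ⟶ X} (hs : S.W s) (f : X' ⟶ Y) :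
    ∃ (Y' : C) (f' : X ⟶ Y') (t : Y ⟶ Y'), S.W t ∧ f ≫ t = s ≫ f' := by
  obtain ⟨Z, g, δ, hT, hZ⟩ := hs
  obtain ⟨Y', t, δ', hT'⟩ := distinguished_cocone_triangle₂ (δ ≫ f⟦(1 : ℤ)⟧')
  obtain ⟨f', hf', -⟩ := complete_distinguished_triangle_morphism₂ _ _ hT hT' f (𝟙 Z)
    (id_comp _).symm
  exact ⟨Y', f', t, ⟨Z, δ', _, hT', hZ⟩, hf'.symm⟩

lemma Subcategory.W.ext {X' X Y : C} {s : X' ⟶ X} (hs : S.W s) {f₁ f₂ : X ⟶ Y}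
    (h : s ≫ f₁ = s ≫ f₂) : ∃ (Y' : C) (t : Y ⟶ Y'), S.W t ∧ f₁ ≫ t = f₂ ≫ t := by
  obtain ⟨Z, g, δ, hT, hZ⟩ := hs
  have hs₀ : s ≫ (f₁ - f₂) = 0 := by rw [Preadditive.comp_sub, h, sub_self]
  obtain ⟨q : Z ⟶ Y, hq : f₁ - f₂ = g ≫ q⟩ := Triangle.yoneda_exact₂ _ hT _ hs₀
  obtain ⟨Y', t, δ', hT'⟩ := distinguished_cocone_triangle q
  refine ⟨Y', t, ⟨_, _, _, rot_of_distTriang _ hT', S.shift _ _ hZ⟩, ?_⟩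
  have hqt : q ≫ t = 0 := comp_distTriang_mor_zero₁₂ _ hT'
  rw [← sub_eq_zero, ← Preadditive.sub_comp, hq, assoc, hqt, comp_zero]

instance : S.W.multiplicativeClosure.HasLeftCalculusOfFractions :=
  MorphismProperty.hasLeftCalculusOfFractions_multiplicativeClosure _
    (fun _ _ _ _ hs f => hs.ore f) (fun _ _ _ _ _ _ hs h => hs.ext h)

section Lift

variable {C D : Type*} [Category C] [Category D]
  [Preadditive C] [HasZeroObject C] [HasShift C ℤ]
  [∀ n : ℤ, (shiftFunctor C n).Additive] [Pretriangulated C]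
  [Preadditive D] [HasZeroObject D] [HasShift D ℤ]
  [∀ n : ℤ, (shiftFunctor D n).Additive] [Pretriangulated D]
  (ι : C ⥤ D) [ι.Full] [ι.CommShift ℤ] [ι.IsTriangulated]
  {SE : Subcategory C} {SE' : Subcategory D}
  (h₂ : ∀ Y : D, SE'.P Y → ∃ X : C, SE.P X ∧ Nonempty (ι.obj X ≅ Y))
include h₂

lemma Subcategory.W.exists_lift {X : C} {M Z : D} (α : ι.obj X ≅ M) {s : M ⟶ Z}
    (hs : SE'.W s) :
    ∃ (X' : C) (t : X ⟶ X') (β : ι.obj X' ≅ Z), SE.W t ∧ ι.map t ≫ β.hom = α.hom ≫ s := by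
  obtain ⟨E, g, δ, hT, hE⟩ := hs
  obtain ⟨X₀, hX₀, ⟨ε⟩⟩ := h₂ E hE
  let m : E⟦(-1 : ℤ)⟧ ⟶ M := (Triangle.mk s g δ).invRotate.mor₁
  let ε' : ι.obj (X₀⟦(-1 : ℤ)⟧) ≅ E⟦(-1 : ℤ)⟧ :=
    (ι.commShiftIso (-1 : ℤ)).app X₀ ≪≫ (shiftFunctor D (-1 : ℤ)).mapIso ε
  let u : X₀⟦(-1 : ℤ)⟧ ⟶ X := ι.preimage (ε'.hom ≫ m ≫ α.inv)
  have hu : ε'.hom ≫ m = ι.map u ≫ α.hom := by simp [u]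
  obtain ⟨X', t, w, hT'⟩ := distinguished_cocone_triangle u
  obtain ⟨e, -, he₂⟩ := exists_iso_of_arrow_iso _ _ (ι.map_distinguished _ hT')
    (inv_rot_of_distTriang _ hT) (Arrow.isoMk ε' α hu)
  refine ⟨X', t, Triangle.π₃.mapIso e,
    ⟨_, _, _, rot_of_distTriang _ hT', SE.shift _ _ (SE.shift _ _ hX₀)⟩, ?_⟩
  exact e.hom.comm₂.trans (by rw [he₂]; rfl)

lemma Subcategory.exists_lift_of_multiplicativeClosure_W {X : C} {M Z : D} (α : ι.obj X ≅ M)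
    {s : M ⟶ Z} (hs : SE'.W.multiplicativeClosure s) :
    ∃ (X' : C) (t : X ⟶ X') (β : ι.obj X' ≅ Z),
      SE.W.multiplicativeClosure t ∧ ι.map t ≫ β.hom = α.hom ≫ s := by
  induction hs generalizing X with
  | of s hs =>
    obtain ⟨X', t, β, ht, fac⟩ := hs.exists_lift ι h₂ α
    exact ⟨X', t, β, .of t ht, fac⟩
  | id M => exact ⟨X, 𝟙 X, α, .id X, by simp⟩
  | comp_of s g _ hg ih =>
    obtain ⟨X₁, t₁, β₁, ht₁, fac₁⟩ := ih α
    obtain ⟨X₂, t₂, β₂, ht₂, fac₂⟩ := hg.exists_lift ι h₂ β₁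
    exact ⟨X₂, t₁ ≫ t₂, β₂, .comp_of _ _ ht₁ ht₂,
      by rw [ι.map_comp, assoc, fac₂, reassoc_of% fac₁]⟩

variable {D' : Type*} [Category D'] (L : D ⥤ D') [L.IsLocalization SE'.W]

lemma Subcategory.exists_comp_map_eq_map {X₁ X₂ : C} (φ : L.obj (ι.obj X₁) ⟶ L.obj (ι.obj X₂)) :
    ∃ (X₃ : C) (a : X₁ ⟶ X₃) (t : X₂ ⟶ X₃),
      SE.W.multiplicativeClosure t ∧ φ ≫ L.map (ι.map t) = L.map (ι.map a) := by
  have := Functor.IsLocalization.multiplicativeClosure L SE'.W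
  obtain ⟨ψ, rfl⟩ := Localization.exists_leftFraction L SE'.W.multiplicativeClosure φ
  obtain ⟨X₃, t, β, ht, fac⟩ := exists_lift_of_multiplicativeClosure_W ι h₂ (Iso.refl _) ψ.hs
  have hι : ι.map t = ψ.s ≫ β.inv := β.eq_comp_inv.2 (by simpa using fac)
  refine ⟨X₃, ι.preimage (ψ.f ≫ β.inv), t, ht, ?_⟩
  rw [hι, ι.map_preimage, L.map_comp, L.map_comp, ψ.map_comp_map_s_assoc]

lemma Subcategory.exists_comp_eq_comp_of_map_eq [ι.Faithful] {X₁ X₂ : C} {f g : X₁ ⟶ X₂}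
    (h : L.map (ι.map f) = L.map (ι.map g)) :
    ∃ (X₃ : C) (t : X₂ ⟶ X₃), SE.W.multiplicativeClosure t ∧ f ≫ t = g ≫ t := by
  have := Functor.IsLocalization.multiplicativeClosure L SE'.W
  obtain ⟨Z, s, hs, fac⟩ := 
    (MorphismProperty.map_eq_iff_postcomp L SE'.W.multiplicativeClosure _ _).1 h
  obtain ⟨X₃, t, β, ht, hβ⟩ := exists_lift_of_multiplicativeClosure_W ι h₂ (Iso.refl _) hs
  have hι : ι.map t = s ≫ β.inv := β.eq_comp_inv.2 (by simpa using hβ)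
  exact ⟨X₃, t, ht, ι.map_injective (by simp [hι, reassoc_of% fac])⟩

end Lift

end Triangulated

end CategoryTheory

/-- Let `ι : C ⥤ D` be a fully faithful triangulated inclusion of triangulated
categories, `SE` a triangulated subcategory of `C` whose image is the triangulated
subcategory `SE'` of `D`. Then the functor induced on Verdier quotients
`C/E ⥤ D/E` (between localizations at the respective classes of morphisms with
cone in `E`) is fully faithful. -/
theorem verdier_quotient_fully_faithful
    {C D C' D' : Type*} [Category C] [Category D] [Category C'] [Category D']
    [Preadditive C] [HasZeroObject C] [HasShift C ℤ]
    [∀ n : ℤ, (shiftFunctor C n).Additive] [Pretriangulated C]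
    [Preadditive D] [HasZeroObject D] [HasShift D ℤ]
    [∀ n : ℤ, (shiftFunctor D n).Additive] [Pretriangulated D]
    (ι : C ⥤ D) [ι.Full] [ι.Faithful] [ι.CommShift ℤ] [ι.IsTriangulated]
    (SE : Triangulated.Subcategory C) (SE' : Triangulated.Subcategory D)
    (h₁ : ∀ X : C, SE.P X → SE'.P (ι.obj X))
    (h₂ : ∀ Y : D, SE'.P Y → ∃ X : C, SE.P X ∧ Nonempty (ι.obj X ≅ Y))
    (L₁ : C ⥤ C') [L₁.IsLocalization SE.W]
    (L₂ : D ⥤ D') [L₂.IsLocalization SE'.W]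
    (F : C' ⥤ D') (e : L₁ ⋙ F ≅ ι ⋙ L₂) :
    F.Full ∧ F.Faithful := by
  have : L₁.EssSurj := Localization.essSurj L₁ SE.W
  have := Functor.IsLocalization.multiplicativeClosure L₁ SE.W
  have hL₁ := Localization.inverts L₁ SE.W.multiplicativeClosure
  have hF {X₁ X₂ : C} (f : X₁ ⟶ X₂) :
      F.map (L₁.map f) = e.hom.app X₁ ≫ L₂.map (ι.map f) ≫ e.inv.app X₂ :=
    (NatIso.naturality_2 e f).symm
  constructor
  · refine F.full_of_comp_essSurj L₁ fun X₁ X₂ φ => ?_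
    obtain ⟨X₃, a, t, ht, fac⟩ :=
      SE.exists_comp_map_eq_map ι h₂ L₂ (e.inv.app X₁ ≫ φ ≫ e.hom.app X₂)
    have := hL₁ t ht
    refine ⟨L₁.map a ≫ inv (L₁.map t), ?_⟩
    rw [← cancel_mono (F.map (L₁.map t)), ← F.map_comp, Category.assoc, IsIso.inv_hom_id,
      Category.comp_id, hF, hF, ← fac]
    simp
  · refine Functor.faithful_of_comp_of_hasLeftCalculusOfFractions L₁ SE.W.multiplicativeClosure F
      fun X₁ X₂ f g hfg => ?_
    obtain ⟨X₃, t, ht, fac⟩ := SE.exists_comp_eq_comp_of_map_eq ι h₂ L₂ (f := f) (g := g)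
      ((cancel_mono (e.inv.app X₂)).1 (by simpa [hF] using hfg))
    have := hL₁ t ht
    rw [← cancel_mono (L₁.map t), ← L₁.map_comp, ← L₁.map_comp, fac]
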